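/- Let u, w ∈ S_{[a,n]}, let i, k ∈ [a, n-1], and construct u', w' ∈ S_{[a,n+1]} by inserting the value n+1 into position i+1 of the one-line notations of u and w respectively (i.e., u'(t) = u(t) for t ≤ i, u'(i+1) = n+1, u'(t) = u(t-1) for i+1 < t ≤ n+1, and similarly for w'). If i ≤ k, then u →^k w if and only if u' →^{k+1} w', and moreover fix_{(k,n]}(u,w) = fix_{(k+1,n+1]}(u',w'). If i ≥ k, then u →^k w if and only if u' →^k w', and fix_{(k,n]}(u,w) ∪ {n+1} = fix_{(k,n+1]}(u',w'). -/

import Mathlib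

/-- `w` has finitely many non-fixed points. -/
def FinSupp (w : Equiv.Perm ℤ) : Prop := {i : ℤ | w i ≠ i}.Finite

/-- Descent set of a permutation of ℤ. -/
def Des (w : Equiv.Perm ℤ) : Set ℤ := {i : ℤ | w (i + 1) < w i}

/-- Number of inversions. -/
noncomputable def permLength (w : Equiv.Perm ℤ) : ℕ :=
  {p : ℤ × ℤ | p.1 < p.2 ∧ w p.2 < w p.1}.ncard

/-- Membership in `S_{[a,n]}`: all non-fixed points lie in `[a,n]`. -/
def InS (a n : ℤ) (w : Equiv.Perm ℤ) : Prop := ∀ i : ℤ, w i ≠ i → a ≤ i ∧ i ≤ n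

/-- Cover relation of the `k`-Bruhat order. -/
def BCover (k : ℤ) (u w : Equiv.Perm ℤ) : Prop :=
  ∃ i j : ℤ, i ≤ k ∧ k < j ∧ w = u * Equiv.swap i j ∧
    permLength w = permLength u + 1

/-- The `k`-Bruhat order: reflexive-transitive closure of the cover relation. -/
def kBruhat (k : ℤ) : Equiv.Perm ℤ → Equiv.Perm ℤ → Prop :=
  Relation.ReflTransGen (BCover k)

/-- There is an increasing `k`-chain from `u` to `w`. -/
def IncTo (k : ℤ) (u w : Equiv.Perm ℤ) : Prop :=
  ∃ (m : ℕ) (us : ℕ → Equiv.Perm ℤ) (ab : ℕ → ℤ × ℤ),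
    us 0 = u ∧ us m = w ∧
    (∀ i < m, (ab i).1 ≤ k ∧ k < (ab i).2 ∧
      us (i + 1) = us i * Equiv.swap (ab i).1 (ab i).2 ∧
      permLength (us (i + 1)) = permLength (us i) + 1) ∧
    (∀ i j : ℕ, i < j → j < m → us i (ab i).1 < us j (ab j).1)

/-- `fix_{(lo,hi]}(u,w) = {u(t) : lo < t ≤ hi, u(t) = w(t)}`. -/
def fixSet (lo hi : ℤ) (u w : Equiv.Perm ℤ) : Set ℤ :=
  {m : ℤ | ∃ t : ℤ, lo < t ∧ t ≤ hi ∧ u t = m ∧ w t = m}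


/-!
Write `e = insertAt i n`, so that `u' = u * e` and `w' = w * e`. Right multiplication by `e` adds
exactly the `n - i` inversions `(i + 1, t)`, `i + 1 < t ≤ n + 1`, and turns `swap p q` into the
transposition of the corresponding positions. Away from `i + 1`, `e` maps the positions `≤ k + 1`
(if `i ≤ k`), resp. `≤ k` (if `k ≤ i`), onto the positions `≤ k`, so covers and increasing chains
correspond. Conversely, along a `k'`-chain the value at a position `≤ k'` can only grow and at a
position `> k'` only shrink; hence the value `n + 1`, at position `i + 1` at both ends, never moves,
and every member of a chain from `u'` to `w'` is of the form `v * e` with `v ∈ S_{[a,n]}`.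
-/
open Equiv

def inversions (v : Perm ℤ) : Set (ℤ × ℤ) := {p | p.1 < p.2 ∧ v p.2 < v p.1}

lemma permLength_eq_ncard (v : Perm ℤ) : permLength v = (inversions v).ncard := rfl

@[simp]
lemma mem_inversions {v : Perm ℤ} {s t : ℤ} : (s, t) ∈ inversions v ↔ s < t ∧ v t < v s :=
  Iff.rfl

section Support

variable {a n : ℤ} {v : Perm ℤ}

lemma inS_iff : InS a n v ↔ ∀ t, t < a ∨ n < t → v t = t :=
  ⟨fun hv t ht => by_contra fun h => by have := hv t h; omega,
   fun hv t ht => by by_contra h; exact ht (hv t (by omega))⟩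

lemma InS.apply_of_lt (hv : InS a n v) {t : ℤ} (ht : t < a) : v t = t :=
  inS_iff.1 hv t (.inl ht)

lemma InS.apply_of_gt (hv : InS a n v) {t : ℤ} (ht : n < t) : v t = t :=
  inS_iff.1 hv t (.inr ht)

lemma InS.apply_le_iff (hv : InS a n v) {t : ℤ} : v t ≤ n ↔ t ≤ n := by
  refine ⟨fun h => by_contra fun ht => ?_, fun ht => by_contra fun h => ?_⟩
  · rw [hv.apply_of_gt (by omega)] at h; omega
  · have := v.injective (hv.apply_of_gt (t := v t) (by omega))
    omega

lemma InS.apply_ge_iff (hv : InS a n v) {t : ℤ} : a ≤ v t ↔ a ≤ t := by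
  refine ⟨fun h => by_contra fun ht => ?_, fun ht => by_contra fun h => ?_⟩
  · rw [hv.apply_of_lt (by omega)] at h; omega
  · have := v.injective (hv.apply_of_lt (t := v t) (by omega))
    omega

lemma InS.finSupp (hv : InS a n v) : FinSupp v :=
  (Set.finite_Icc a n).subset fun t ht => Set.mem_Icc.2 (hv t ht)

lemma FinSupp.exists_inS (hv : FinSupp v) : ∃ a n, InS a n v := by
  obtain ⟨n, hn⟩ := hv.bddAbove
  obtain ⟨a, ha⟩ := hv.bddBelow
  exact ⟨a, n, fun t ht => ⟨ha ht, hn ht⟩⟩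

lemma FinSupp.mul_swap (hv : FinSupp v) (p q : ℤ) : FinSupp (v * swap p q) := by
  refine (hv.union (Set.toFinite {p, q})).subset fun t ht => ?_
  by_cases htpq : t = p ∨ t = q
  · exact .inr htpq
  · push Not at htpq
    left
    simpa [Perm.mul_apply, swap_apply_of_ne_of_ne htpq.1 htpq.2] using ht

lemma InS.inversions_subset (hv : InS a n v) :
    inversions v ⊆ Set.Icc a n ×ˢ Set.Icc a n := by
  rintro ⟨s, t⟩ ⟨hst, hvts : v t < v s⟩
  have hs : s < a → v s = s := hv.apply_of_lt
  have hs' : n < s → v s = s := hv.apply_of_gt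
  have ht : t < a → v t = t := hv.apply_of_lt
  have ht' : n < t → v t = t := hv.apply_of_gt
  have := hv.apply_le_iff (t := s)
  have := hv.apply_ge_iff (t := t)
  simp only [Set.mem_prod, Set.mem_Icc]
  omega

lemma FinSupp.inversions_finite (hv : FinSupp v) : (inversions v).Finite := by
  obtain ⟨a, n, hv⟩ := hv.exists_inS
  exact ((Set.finite_Icc a n).prod (Set.finite_Icc a n)).subset hv.inversions_subset

end Support

section Transposition

variable {v : Perm ℤ} {p q : ℤ}

/-- Applying `swap p q` to an inversion of `v` whenever the result is still increasing injects
`inversions v` into the inversions of `v * swap p q` other than `(p, q)`. -/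
lemma permLength_lt_mul_swap (hfin : (inversions (v * swap p q)).Finite) (hpq : p < q)
    (hv : v p < v q) : permLength v < permLength (v * swap p q) := by
  set τ := swap p q
  let f : ℤ × ℤ → ℤ × ℤ := fun s => if τ s.1 < τ s.2 then (τ s.1, τ s.2) else s
  have hmaps : ∀ s ∈ inversions v, f s ∈ inversions (v * τ) \ {(p, q)} := by
    rintro ⟨s, t⟩ ⟨hst, hvts : v t < v s⟩
    by_cases hτ : τ s < τ t
    · simp only [f, if_pos hτ]
      refine ⟨⟨hτ, by simpa [τ, Perm.mul_apply] using hvts⟩, fun h => ?_⟩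
      simp only [Set.mem_singleton_iff, Prod.mk.injEq, τ, swap_apply_eq_iff,
        swap_apply_left, swap_apply_right] at h
      omega
    · simp only [f, if_neg hτ]
      refine ⟨⟨hst, ?_⟩, fun h => ?_⟩
      · simp only [τ, Perm.mul_apply, swap_apply_def] at hτ ⊢
        split_ifs at hτ ⊢ <;> subst_vars <;> omega
      · simp only [Set.mem_singleton_iff, Prod.mk.injEq] at h
        obtain ⟨rfl, rfl⟩ := h
        omega
  have hinj : Set.InjOn f (inversions v) := by
    rintro ⟨s, t⟩ ⟨hst, -⟩ ⟨s', t'⟩ ⟨hst', -⟩ heq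
    by_cases hτ : τ s < τ t <;> by_cases hτ' : τ s' < τ t' <;>
      simp only [f, hτ, hτ', if_true, if_false, Prod.mk.injEq] at heq
    · rw [τ.injective heq.1, τ.injective heq.2]
    · rw [← heq.1, ← heq.2, swap_apply_self, swap_apply_self] at hτ'
      exact absurd hst hτ'
    · rw [heq.1, heq.2, swap_apply_self, swap_apply_self] at hτ
      exact absurd hst' hτ
    · rw [heq.1, heq.2]
  have hmem : (p, q) ∈ inversions (v * τ) := ⟨hpq, by simpa [τ, Perm.mul_apply] using hv⟩
  calc permLength v ≤ (inversions (v * τ) \ {(p, q)}).ncard :=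
        Set.ncard_le_ncard_of_injOn f hmaps hinj hfin.sdiff
    _ < permLength (v * τ) := Set.ncard_sdiff_singleton_lt_of_mem hmem hfin

lemma apply_lt_of_permLength_mul_swap (hv : FinSupp v) (hpq : p < q)
    (hlen : permLength (v * swap p q) = permLength v + 1) : v p < v q := by
  refine lt_of_le_of_ne (not_lt.1 fun hlt => ?_) fun h => hpq.ne (v.injective h)
  have := permLength_lt_mul_swap (v := v * swap p q) (p := p) (q := q)
    (by simpa [mul_assoc] using hv.inversions_finite) hpq (by simpa [Perm.mul_apply] using hlt)
  rw [mul_assoc, swap_mul_self, mul_one] at this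
  omega

end Transposition

lemma InS.mem_Icc_of_apply_ne {a n : ℤ} {x y : Perm ℤ} (hx : InS a n x) (hy : InS a n y)
    {t : ℤ} (h : x t ≠ y t) : a ≤ t ∧ t ≤ n := by
  by_cases hxt : x t = t
  · exact hy t fun hyt => h (hxt.trans hyt.symm)
  · exact hx t hxt

def KStep (k : ℤ) (x y : Perm ℤ) (p q : ℤ) : Prop :=
  p ≤ k ∧ k < q ∧ y = x * swap p q ∧ permLength y = permLength x + 1

/-- `IncTo k u w` unfolds to such a chain from `u` to `w` whose values `us j (ab j).1` increase. -/
def IsKChain (k : ℤ) (m : ℕ) (us : ℕ → Perm ℤ) (ab : ℕ → ℤ × ℤ) : Prop :=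
  ∀ j < m, KStep k (us j) (us (j + 1)) (ab j).1 (ab j).2

namespace KStep

variable {k p q t : ℤ} {x y : Perm ℤ}

lemma lt (h : KStep k x y p q) : p < q := lt_of_le_of_lt h.1 h.2.1

lemma finSupp (h : KStep k x y p q) (hx : FinSupp x) : FinSupp y :=
  h.2.2.1 ▸ hx.mul_swap p q

lemma apply_lt (h : KStep k x y p q) (hx : FinSupp x) : x p < x q :=
  apply_lt_of_permLength_mul_swap hx h.lt (h.2.2.1 ▸ h.2.2.2)

lemma apply_left (h : KStep k x y p q) : y p = x q := by
  rw [h.2.2.1, Perm.mul_apply, swap_apply_left]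

lemma apply_right (h : KStep k x y p q) : y q = x p := by
  rw [h.2.2.1, Perm.mul_apply, swap_apply_right]

lemma apply_of_ne (h : KStep k x y p q) (hp : t ≠ p) (hq : t ≠ q) : y t = x t := by
  rw [h.2.2.1, Perm.mul_apply, swap_apply_of_ne_of_ne hp hq]

lemma apply_left_ne (h : KStep k x y p q) : y p ≠ x p := by
  rw [h.apply_left]
  exact x.injective.ne h.lt.ne'

lemma apply_right_ne (h : KStep k x y p q) : y q ≠ x q := by
  rw [h.apply_right]
  exact x.injective.ne h.lt.ne

lemma apply_le_of_le (h : KStep k x y p q) (hx : FinSupp x) (ht : t ≤ k) : x t ≤ y t := by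
  by_cases htp : t = p
  · rw [htp, h.apply_left]
    exact (h.apply_lt hx).le
  · rw [h.apply_of_ne htp (by have := h.2.1; omega)]

lemma apply_le_of_lt (h : KStep k x y p q) (hx : FinSupp x) (ht : k < t) : y t ≤ x t := by
  by_cases htq : t = q
  · rw [htq, h.apply_right]
    exact (h.apply_lt hx).le
  · rw [h.apply_of_ne (by have := h.1; omega) htq]

end KStep

namespace IsKChain

variable {k t : ℤ} {m j : ℕ} {us : ℕ → Perm ℤ} {ab : ℕ → ℤ × ℤ}

lemma finSupp (hc : IsKChain k m us ab) (h0 : FinSupp (us 0)) : ∀ j ≤ m, FinSupp (us j)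
  | 0, _ => h0
  | j + 1, hj => (hc j hj).finSupp (hc.finSupp h0 j (by omega))

lemma monotoneOn_apply (hc : IsKChain k m us ab) (h0 : FinSupp (us 0)) (ht : t ≤ k) :
    MonotoneOn (fun j => us j t) (Set.Iic m) :=
  monotoneOn_of_le_succ Set.ordConnected_Iic fun j _ _ hj =>
    (hc j hj).apply_le_of_le (hc.finSupp h0 j (by simp at hj; omega)) ht

lemma antitoneOn_apply (hc : IsKChain k m us ab) (h0 : FinSupp (us 0)) (ht : k < t) :
    AntitoneOn (fun j => us j t) (Set.Iic m) :=
  antitoneOn_of_succ_le Set.ordConnected_Iic fun j _ _ hj =>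
    (hc j hj).apply_le_of_lt (hc.finSupp h0 j (by simp at hj; omega)) ht

/-- Along a `k`-chain the value at a position `≤ k` only grows and at a position `> k` only
shrinks, so a position with the same value at both ends is never touched. -/
lemma apply_eq_of_apply_eq (hc : IsKChain k m us ab) (h0 : FinSupp (us 0))
    (ht : us 0 t = us m t) (hj : j ≤ m) : us j t = us 0 t := by
  have h0m : (0 : ℕ) ∈ Set.Iic m := Nat.zero_le m
  have hjm : j ∈ Set.Iic m := hj
  have hmm : m ∈ Set.Iic m := Set.mem_Iic.2 le_rfl
  rcases le_or_gt t k with htk | htk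
  · have h₁ : us 0 t ≤ us j t := hc.monotoneOn_apply h0 htk h0m hjm (Nat.zero_le j)
    have h₂ : us j t ≤ us m t := hc.monotoneOn_apply h0 htk hjm hmm hj
    omega
  · have h₁ : us j t ≤ us 0 t := hc.antitoneOn_apply h0 htk h0m hjm (Nat.zero_le j)
    have h₂ : us m t ≤ us j t := hc.antitoneOn_apply h0 htk hjm hmm hj
    omega

lemma apply_fst_ne (hc : IsKChain k m us ab) (h0 : FinSupp (us 0)) (hj : j < m) :
    us 0 (ab j).1 ≠ us m (ab j).1 := fun h =>
  (hc j hj).apply_left_ne <| by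
    rw [hc.apply_eq_of_apply_eq h0 h hj, hc.apply_eq_of_apply_eq h0 h hj.le]

lemma apply_snd_ne (hc : IsKChain k m us ab) (h0 : FinSupp (us 0)) (hj : j < m) :
    us 0 (ab j).2 ≠ us m (ab j).2 := fun h =>
  (hc j hj).apply_right_ne <| by
    rw [hc.apply_eq_of_apply_eq h0 h hj, hc.apply_eq_of_apply_eq h0 h hj.le]

lemma inS {a n : ℤ} (hc : IsKChain k m us ab) (h0 : InS a n (us 0)) (hm : InS a n (us m))
    (hj : j ≤ m) : InS a n (us j) := by
  refine inS_iff.2 fun t ht => ?_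
  rw [hc.apply_eq_of_apply_eq h0.finSupp (by rw [inS_iff.1 h0 t ht, inS_iff.1 hm t ht]) hj,
    inS_iff.1 h0 t ht]

end IsKChain

/-- For `u ∈ S_{[a,n]}`, the one-line notation of `u * insertAt i n` is that of `u` with the value
`n + 1` inserted at position `i + 1`: this is the cycle `i + 1 ↦ n + 1 ↦ n ↦ ⋯ ↦ i + 2 ↦ i + 1`
(the identity when `n < i`). -/
def insertAt (i n : ℤ) : Perm ℤ where
  toFun x := if x = i + 1 ∧ i ≤ n then n + 1 else if i + 1 < x ∧ x ≤ n + 1 then x - 1 else x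
  invFun x := if x = n + 1 ∧ i ≤ n then i + 1 else if i < x ∧ x ≤ n then x + 1 else x
  left_inv x := by dsimp only; split_ifs <;> omega
  right_inv x := by dsimp only; split_ifs <;> omega

section InsertAt

variable {i n x y : ℤ}

lemma insertAt_apply (x : ℤ) : insertAt i n x =
    if x = i + 1 ∧ i ≤ n then n + 1 else if i + 1 < x ∧ x ≤ n + 1 then x - 1 else x :=
  rfl

lemma insertAt_apply_of_le (hx : x ≤ i) : insertAt i n x = x := by
  rw [insertAt_apply]; split_ifs <;> omega

lemma insertAt_apply_add_one (hin : i ≤ n) : insertAt i n (i + 1) = n + 1 := by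
  rw [insertAt_apply]; split_ifs <;> omega

lemma insertAt_apply_of_lt_of_le (h₁ : i + 1 < x) (h₂ : x ≤ n + 1) : insertAt i n x = x - 1 := by
  rw [insertAt_apply]; split_ifs <;> omega

lemma insertAt_apply_of_gt (hx : n + 1 < x) : insertAt i n x = x := by
  rw [insertAt_apply]; split_ifs <;> omega

lemma insertAt_lt_insertAt_iff (hx : x ≠ i + 1) (hy : y ≠ i + 1) :
    insertAt i n x < insertAt i n y ↔ x < y := by
  simp only [insertAt_apply]; split_ifs <;> omega

lemma insertAt_le_iff (hin : i ≤ n) (hx : x ≠ i + 1) : insertAt i n x ≤ n ↔ x ≤ n + 1 := by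
  rw [insertAt_apply]; split_ifs <;> omega

lemma insertAt_symm_apply_eq_iff (hin : i ≤ n) : (insertAt i n).symm y = i + 1 ↔ y = n + 1 := by
  rw [Equiv.symm_apply_eq, insertAt_apply_add_one hin, eq_comm]

lemma InS.mul_insertAt {a : ℤ} {v : Perm ℤ} (hv : InS a n v) (ha : a ≤ i + 1) :
    InS a (n + 1) (v * insertAt i n) := by
  refine inS_iff.2 fun t ht => ?_
  rcases ht with ht | ht
  · rw [Perm.mul_apply, insertAt_apply_of_le (by omega), hv.apply_of_lt ht]
  · rw [Perm.mul_apply, insertAt_apply_of_gt ht, hv.apply_of_gt (by omega)]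

lemma InS.mul_insertAt_inv {a : ℤ} {v : Perm ℤ} (hv : InS a (n + 1) v) (ha : a ≤ i + 1)
    (hin : i ≤ n) (hvi : v (i + 1) = n + 1) : InS a n (v * (insertAt i n)⁻¹) := by
  refine inS_iff.2 fun t ht => ?_
  rw [Perm.mul_apply, Perm.inv_def]
  rcases lt_trichotomy t (n + 1) with htn | rfl | htn
  · rw [(insertAt i n).symm_apply_eq.2 (insertAt_apply_of_le (x := t) (by omega)).symm,
      hv.apply_of_lt (by omega)]
  · rw [(insertAt_symm_apply_eq_iff hin).2 rfl, hvi]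
  · rw [(insertAt i n).symm_apply_eq.2 (insertAt_apply_of_gt htn).symm, hv.apply_of_gt htn]

lemma inversions_mul_insertAt {a : ℤ} {v : Perm ℤ} (hv : InS a n v) (hin : i ≤ n) :
    inversions (v * insertAt i n) =
      Prod.map (insertAt i n) (insertAt i n) ⁻¹' inversions v ∪
        {i + 1} ×ˢ Set.Ioc (i + 1) (n + 1) := by
  ext ⟨x, y⟩
  simp only [Set.mem_union, Set.mem_preimage, Prod.map, mem_inversions, Set.mem_prod,
    Set.mem_singleton_iff, Set.mem_Ioc, Perm.mul_apply]
  have hvn : v (n + 1) = n + 1 := hv.apply_of_gt (by omega)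
  rcases eq_or_ne x (i + 1) with rfl | hx <;> rcases eq_or_ne y (i + 1) with rfl | hy
  · simp
  · have := insertAt_le_iff hin hy
    have := hv.apply_le_iff (t := insertAt i n y)
    rw [insertAt_apply_add_one hin, hvn]
    omega
  · have := insertAt_le_iff hin hx
    have := hv.apply_le_iff (t := insertAt i n x)
    rw [insertAt_apply_add_one hin, hvn]
    omega
  · rw [insertAt_lt_insertAt_iff hx hy]
    tauto

lemma permLength_mul_insertAt {a : ℤ} {v : Perm ℤ} (hv : InS a n v) (hin : i ≤ n) :
    permLength (v * insertAt i n) = permLength v + (n - i).toNat := by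
  have hinj : Function.Injective (Prod.map (insertAt i n) (insertAt i n)) :=
    (insertAt i n).injective.prodMap (insertAt i n).injective
  have hdisj : Disjoint (Prod.map (insertAt i n) (insertAt i n) ⁻¹' inversions v)
      ({i + 1} ×ˢ Set.Ioc (i + 1) (n + 1)) := by
    refine Set.disjoint_left.2 fun ⟨x, y⟩ hxy hx => ?_
    obtain ⟨rfl, -⟩ := Set.mem_prod.1 hx
    have := (hv.inversions_subset hxy).1.2
    simp only [Prod.map_fst, insertAt_apply_add_one hin] at this
    omega
  rw [permLength_eq_ncard, inversions_mul_insertAt hv hin,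
    Set.ncard_union_eq hdisj ((hv.finSupp.inversions_finite).preimage hinj.injOn)
      ((Set.finite_singleton _).prod (Set.finite_Ioc _ _)),
    Set.ncard_preimage_of_injective_subset_range hinj (by simp [(insertAt i n).surjective.prodMap
      (insertAt i n).surjective |>.range_eq]),
    Set.ncard_prod, Set.ncard_singleton, one_mul, ← Finset.coe_Ioc, Set.ncard_coe_finset,
    Int.card_Ioc, permLength_eq_ncard]
  omega

end InsertAt

section Transfer

variable {a i n k k' : ℤ} {u w : Perm ℤ}

lemma insertAt_symm_apply_ne (hin : i ≤ n) {p : ℤ} (hp : p ≠ n + 1) :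
    (insertAt i n).symm p ≠ i + 1 :=
  (insertAt_symm_apply_eq_iff hin).not.2 hp

lemma insertAt_symm_apply_le (hin : i ≤ n) {p : ℤ} (hp : p ≤ n) :
    (insertAt i n).symm p ≤ n + 1 := by
  have := insertAt_le_iff hin (insertAt_symm_apply_ne hin (p := p) (by omega))
  rw [Equiv.apply_symm_apply] at this
  exact this.1 hp

lemma InS.mul_insertAt_apply_add_one {v : Perm ℤ} (hv : InS a n v) (hin : i ≤ n) :
    (v * insertAt i n) (i + 1) = n + 1 := by
  rw [Perm.mul_apply, insertAt_apply_add_one hin, hv.apply_of_gt (by omega)]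

lemma insertAt_le_iff_le_add_one (hik : i ≤ k) :
    ∀ t ≤ n + 1, t ≠ i + 1 → (insertAt i n t ≤ k ↔ t ≤ k + 1) := by
  intro t ht ht'
  rw [insertAt_apply]; split_ifs <;> omega

lemma insertAt_le_iff_le (hki : k ≤ i) :
    ∀ t ≤ n + 1, t ≠ i + 1 → (insertAt i n t ≤ k ↔ t ≤ k) := by
  intro t _ ht'
  rw [insertAt_apply]; split_ifs <;> omega

lemma kStep_mul_insertAt_iff {x y : Perm ℤ} (hx : InS a n x) (hy : InS a n y) (hin : i ≤ n)
    (hk : ∀ t ≤ n + 1, t ≠ i + 1 → (insertAt i n t ≤ k ↔ t ≤ k'))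
    {p q : ℤ} (hp : p ≤ n + 1) (hp' : p ≠ i + 1) (hq : q ≤ n + 1) (hq' : q ≠ i + 1) :
    KStep k' (x * insertAt i n) (y * insertAt i n) p q ↔
      KStep k x y (insertAt i n p) (insertAt i n q) := by
  have hconj : x * insertAt i n * swap p q =
      x * swap (insertAt i n p) (insertAt i n q) * insertAt i n := by
    rw [swap_apply_apply]
    group
  have hkp := hk p hp hp'
  have hkq := hk q hq hq'
  simp only [KStep, hconj, mul_left_inj, permLength_mul_insertAt hx hin,
    permLength_mul_insertAt hy hin]
  constructor <;> rintro ⟨h₁, h₂, h₃, h₄⟩ <;> exact ⟨by omega, by omega, h₃, by omega⟩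

lemma IncTo.mul_insertAt (hu : InS a n u) (hw : InS a n w) (hin : i ≤ n)
    (hk : ∀ t ≤ n + 1, t ≠ i + 1 → (insertAt i n t ≤ k ↔ t ≤ k')) (h : IncTo k u w) :
    IncTo k' (u * insertAt i n) (w * insertAt i n) := by
  obtain ⟨m, us, ab, rfl, rfl, hc, hinc⟩ := h
  have hc : IsKChain k m us ab := hc
  set e := insertAt i n
  refine ⟨m, fun j => us j * e, fun j => (e.symm (ab j).1, e.symm (ab j).2), rfl, rfl,
    fun j hj => ?_, fun j j' hjj' hj' => ?_⟩
  · have hp := (hu.mem_Icc_of_apply_ne hw (hc.apply_fst_ne hu.finSupp hj)).2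
    have hq := (hu.mem_Icc_of_apply_ne hw (hc.apply_snd_ne hu.finSupp hj)).2
    refine (kStep_mul_insertAt_iff (hc.inS hu hw hj.le) (hc.inS hu hw hj) hin hk
      (insertAt_symm_apply_le hin hp) (insertAt_symm_apply_ne hin (by omega))
      (insertAt_symm_apply_le hin hq) (insertAt_symm_apply_ne hin (by omega))).2 ?_
    simpa only [e, Equiv.apply_symm_apply] using hc j hj
  · simpa only [Perm.mul_apply, Equiv.apply_symm_apply] using hinc j j' hjj' hj'

lemma IncTo.of_mul_insertAt (hu : InS a n u) (hw : InS a n w) (ha : a ≤ i + 1) (hin : i ≤ n)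
    (hk : ∀ t ≤ n + 1, t ≠ i + 1 → (insertAt i n t ≤ k ↔ t ≤ k'))
    (h : IncTo k' (u * insertAt i n) (w * insertAt i n)) : IncTo k u w := by
  obtain ⟨m, vs, ab, h0, hm, hc, hinc⟩ := h
  have hc : IsKChain k' m vs ab := hc
  set e := insertAt i n
  have hv0 : InS a (n + 1) (vs 0) := h0 ▸ hu.mul_insertAt ha
  have hvm : InS a (n + 1) (vs m) := hm ▸ hw.mul_insertAt ha
  have hv0i : vs 0 (i + 1) = n + 1 := h0 ▸ hu.mul_insertAt_apply_add_one hin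
  have hvi : ∀ j ≤ m, vs j (i + 1) = n + 1 := fun j hj => by
    rw [hc.apply_eq_of_apply_eq hv0.finSupp
      (by rw [hv0i, hm, hw.mul_insertAt_apply_add_one hin]) hj, hv0i]
  have hpos : ∀ t, vs 0 t ≠ vs m t → t ≤ n + 1 ∧ t ≠ i + 1 := fun t ht =>
    ⟨(hv0.mem_Icc_of_apply_ne hvm ht).2, by rintro rfl; exact ht (by rw [hv0i, hvi m le_rfl])⟩
  let xs : ℕ → Perm ℤ := fun j => vs j * e⁻¹
  have hxs : ∀ j ≤ m, InS a n (xs j) := fun j hj =>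
    (hc.inS hv0 hvm hj).mul_insertAt_inv ha hin (hvi j hj)
  refine ⟨m, xs, fun j => (e (ab j).1, e (ab j).2), by simp [xs, h0], by simp [xs, hm],
    fun j hj => ?_, fun j j' hjj' hj' => ?_⟩
  · obtain ⟨hp, hp'⟩ := hpos _ (hc.apply_fst_ne hv0.finSupp hj)
    obtain ⟨hq, hq'⟩ := hpos _ (hc.apply_snd_ne hv0.finSupp hj)
    refine (kStep_mul_insertAt_iff (hxs j hj.le) (hxs (j + 1) hj) hin hk hp hp' hq hq').1 ?_
    simpa only [xs, e, inv_mul_cancel_right] using hc j hj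
  · simpa [xs] using hinc j j' hjj' hj'

theorem incTo_mul_insertAt_iff (hu : InS a n u) (hw : InS a n w) (ha : a ≤ i + 1) (hin : i ≤ n)
    (hk : ∀ t ≤ n + 1, t ≠ i + 1 → (insertAt i n t ≤ k ↔ t ≤ k')) :
    IncTo k' (u * insertAt i n) (w * insertAt i n) ↔ IncTo k u w :=
  ⟨.of_mul_insertAt hu hw ha hin hk, .mul_insertAt hu hw hin hk⟩

end Transfer

section FixSet

variable {i n k : ℤ} {u w : Perm ℤ}

lemma fixSet_mul_insertAt_of_le (hik : i ≤ k) :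
    fixSet (k + 1) (n + 1) (u * insertAt i n) (w * insertAt i n) = fixSet k n u w := by
  ext v
  simp only [fixSet, Set.mem_ofPred_eq, Perm.mul_apply]
  constructor
  · rintro ⟨t, h₁, h₂, h₃, h₄⟩
    rw [insertAt_apply_of_lt_of_le (by omega) h₂] at h₃ h₄
    exact ⟨t - 1, by omega, by omega, h₃, h₄⟩
  · rintro ⟨t, h₁, h₂, h₃, h₄⟩
    refine ⟨t + 1, by omega, by omega, ?_, ?_⟩ <;>
      rwa [insertAt_apply_of_lt_of_le (by omega) (by omega), add_sub_cancel_right]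

lemma fixSet_mul_insertAt_of_ge (hki : k ≤ i) (hin : i ≤ n) (hu : u (n + 1) = n + 1)
    (hw : w (n + 1) = n + 1) :
    fixSet k (n + 1) (u * insertAt i n) (w * insertAt i n) = fixSet k n u w ∪ {n + 1} := by
  ext v
  simp only [fixSet, Set.mem_union, Set.mem_ofPred_eq, Set.mem_singleton_iff, Perm.mul_apply]
  constructor
  · rintro ⟨t, h₁, h₂, h₃, h₄⟩
    rcases lt_trichotomy t (i + 1) with ht | rfl | ht
    · rw [insertAt_apply_of_le (by omega)] at h₃ h₄
      exact .inl ⟨t, h₁, by omega, h₃, h₄⟩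
    · rw [insertAt_apply_add_one hin, hu] at h₃
      exact .inr h₃.symm
    · rw [insertAt_apply_of_lt_of_le ht h₂] at h₃ h₄
      exact .inl ⟨t - 1, by omega, by omega, h₃, h₄⟩
  · rintro (⟨t, h₁, h₂, h₃, h₄⟩ | rfl)
    · rcases le_or_gt t i with ht | ht
      · exact ⟨t, h₁, by omega, by rwa [insertAt_apply_of_le ht],
          by rwa [insertAt_apply_of_le ht]⟩
      · refine ⟨t + 1, by omega, by omega, ?_, ?_⟩ <;>
          rwa [insertAt_apply_of_lt_of_le (by omega) (by omega), add_sub_cancel_right]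
    · exact ⟨i + 1, by omega, by omega, by rw [insertAt_apply_add_one hin, hu],
        by rw [insertAt_apply_add_one hin, hw]⟩

end FixSet

lemma eq_mul_insertAt {a i n : ℤ} {u u' : Perm ℤ} (hu : InS a n u) (hu' : InS a (n + 1) u')
    (ha : a ≤ i + 1) (hin : i ≤ n) (h₁ : ∀ t, a ≤ t → t ≤ i → u' t = u t)
    (h₂ : u' (i + 1) = n + 1) (h₃ : ∀ t, i + 1 < t → t ≤ n + 1 → u' t = u (t - 1)) :
    u' = u * insertAt i n := by
  ext t
  rw [Perm.mul_apply]
  rcases lt_or_ge t a with hta | hta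
  · rw [insertAt_apply_of_le (by omega), hu'.apply_of_lt hta, hu.apply_of_lt hta]
  rcases le_or_gt t i with hti | hti
  · rw [insertAt_apply_of_le hti, h₁ t hta hti]
  rcases (show i + 1 ≤ t by omega).eq_or_lt with rfl | hti
  · rw [insertAt_apply_add_one hin, h₂, hu.apply_of_gt (by omega)]
  rcases le_or_gt t (n + 1) with htn | htn
  · rw [insertAt_apply_of_lt_of_le hti htn, h₃ t hti htn]
  · rw [insertAt_apply_of_gt htn, hu'.apply_of_gt htn, hu.apply_of_gt (by omega)]

theorem stmt10_general (a n i k : ℤ) (hai : a ≤ i) (hin : i ≤ n - 1)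
    (u w u' w' : Equiv.Perm ℤ) (hu : InS a n u) (hw : InS a n w)
    (hu' : InS a (n + 1) u') (hw' : InS a (n + 1) w')
    (hu'1 : ∀ t : ℤ, a ≤ t → t ≤ i → u' t = u t)
    (hu'2 : u' (i + 1) = n + 1)
    (hu'3 : ∀ t : ℤ, i + 1 < t → t ≤ n + 1 → u' t = u (t - 1))
    (hw'1 : ∀ t : ℤ, a ≤ t → t ≤ i → w' t = w t)
    (hw'2 : w' (i + 1) = n + 1)
    (hw'3 : ∀ t : ℤ, i + 1 < t → t ≤ n + 1 → w' t = w (t - 1)) :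
    (i ≤ k → ((IncTo k u w ↔ IncTo (k + 1) u' w') ∧
        fixSet k n u w = fixSet (k + 1) (n + 1) u' w')) ∧
    (k ≤ i → ((IncTo k u w ↔ IncTo k u' w') ∧
        fixSet k n u w ∪ {n + 1} = fixSet k (n + 1) u' w')) := by
  obtain rfl := eq_mul_insertAt hu hu' (by omega) (by omega) hu'1 hu'2 hu'3
  obtain rfl := eq_mul_insertAt hw hw' (by omega) (by omega) hw'1 hw'2 hw'3
  refine ⟨fun hik => ⟨?_, ?_⟩, fun hki => ⟨?_, ?_⟩⟩
  · exact (incTo_mul_insertAt_iff hu hw (by omega) (by omega)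
      (insertAt_le_iff_le_add_one hik)).symm
  · exact (fixSet_mul_insertAt_of_le hik).symm
  · exact (incTo_mul_insertAt_iff hu hw (by omega) (by omega) (insertAt_le_iff_le hki)).symm
  · exact (fixSet_mul_insertAt_of_ge hki (by omega) (hu.apply_of_gt (by omega))
      (hw.apply_of_gt (by omega))).symm

theorem stmt10 (a n i k : ℤ) (hai : a ≤ i) (hin : i ≤ n - 1)
    (hak : a ≤ k) (hkn : k ≤ n - 1)
    (u w u' w' : Equiv.Perm ℤ) (hu : InS a n u) (hw : InS a n w)
    (hu' : InS a (n + 1) u') (hw' : InS a (n + 1) w')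
    (hu'1 : ∀ t : ℤ, a ≤ t → t ≤ i → u' t = u t)
    (hu'2 : u' (i + 1) = n + 1)
    (hu'3 : ∀ t : ℤ, i + 1 < t → t ≤ n + 1 → u' t = u (t - 1))
    (hw'1 : ∀ t : ℤ, a ≤ t → t ≤ i → w' t = w t)
    (hw'2 : w' (i + 1) = n + 1)
    (hw'3 : ∀ t : ℤ, i + 1 < t → t ≤ n + 1 → w' t = w (t - 1)) :
    (i ≤ k → ((IncTo k u w ↔ IncTo (k + 1) u' w') ∧
        fixSet k n u w = fixSet (k + 1) (n + 1) u' w')) ∧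
    (k ≤ i → ((IncTo k u w ↔ IncTo k u' w') ∧
        fixSet k n u w ∪ {n + 1} = fixSet k (n + 1) u' w')) :=
  stmt10_general a n i k hai hin u w u' w' hu hw hu' hw' hu'1 hu'2 hu'3 hw'1 hw'2 hw'3
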